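/- In the W[1]-hardness reduction, the set A can be covered by k+1 chains of the closure of B: one chain {s^i, u^i_{1,0} : 1 ≤ i ≤ k} ∪ {s^{k+1}} ∪ {c^{i,j} : 1 ≤ i ≤ j ≤ k}, and for each i ∈ {1,...,k} the chain U^i = {u^i_{p,j} : 1 ≤ p ≤ q, 0 ≤ j ≤ k}; moreover {u^i_{1,1} : 1 ≤ i ≤ k} ∪ {s^{k+1}} is an antichain of size k+1. -/
import Mathlib


/-- Index type for the elements `c^{i,j}`, `1 ≤ i ≤ j ≤ k` (0-indexed here). -/
abbrev CIdx (k : ℕ) := {p : Fin k × Fin k // p.1 ≤ p.2}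

/-- Ground set of the Multicolor Clique reduction: elements `s^i` (`1 ≤ i ≤ k+1`),
`c^{i,j}` (`1 ≤ i ≤ j ≤ k`) and `u^i_{p,j}` (`1 ≤ i ≤ k`, `1 ≤ p ≤ q`, `0 ≤ j ≤ k`);
all indices are 0-indexed except `j`, which ranges over `0..k` as in the paper. -/
abbrev MCG (k q : ℕ) := Fin (k + 1) ⊕ (CIdx k ⊕ (Fin k × Fin q × Fin (k + 1)))

variable {k q : ℕ}

/-- The element `s^{i+1}` (for 0-indexed `i`). -/
def sE (i : Fin (k + 1)) : MCG k q := Sum.inl i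

/-- The element `c^{i+1,j+1}` (for 0-indexed index pair). -/
def cE (c : CIdx k) : MCG k q := Sum.inr (Sum.inl c)

/-- The element `u^{i+1}_{p+1,j}` (for 0-indexed `i`, `p`; `j` as in the paper). -/
def uE (i : Fin k) (p : Fin q) (j : Fin (k + 1)) : MCG k q :=
  Sum.inr (Sum.inr (i, p, j))

/-- `c^{ℓ+1,m+1}` built from natural number indices. -/
def cP (ℓ m : ℕ) (h1 : ℓ ≤ m) (h2 : m < k) : MCG k q :=
  cE ⟨(⟨ℓ, lt_of_le_of_lt h1 h2⟩, ⟨m, h2⟩), Fin.mk_le_mk.mpr h1⟩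

/-- `u^{i+1}_{p+1,j}` built from natural number indices. -/
def uP (i : ℕ) (hi : i < k) (p : Fin q) (j : ℕ) (hj : j < k + 1) : MCG k q :=
  uE ⟨i, hi⟩ p ⟨j, hj⟩

/-- The pair constraints `B` of the reduction. -/
def Brel : MCG k q → MCG k q → Prop
  | Sum.inl i, Sum.inr (Sum.inr (i', _, _)) => i.val = i'.val
  | Sum.inr (Sum.inr (i, p, j)), Sum.inr (Sum.inr (i', p', j')) =>
      i = i' ∧ (p < p' ∨ (p = p' ∧ j < j'))
  | Sum.inr (Sum.inr (i, p, j)), Sum.inl i' =>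
      p.val = 0 ∧ j.val = 0 ∧ i'.val = i.val + 1
  | Sum.inr (Sum.inl c), Sum.inr (Sum.inl c') =>
      c.val.1 < c'.val.1 ∨ (c.val.1 = c'.val.1 ∧ c.val.2 < c'.val.2)
  | Sum.inl i, Sum.inr (Sum.inl c') =>
      i.val = k ∧ c'.val.1.val = 0 ∧ c'.val.2.val = 0
  | _, _ => False


/-- The partial order `π(B)`: reflexive-transitive closure of `B`. -/
def BOrd : MCG k q → MCG k q → Prop := Relation.ReflTransGen Brel

/-- A set that is a chain of `π(B)`: any two elements are comparable. -/
def IsBChain (S : Set (MCG k q)) : Prop :=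
  ∀ x ∈ S, ∀ y ∈ S, BOrd x y ∨ BOrd y x

/-- The chain `{s^i, u^i_{1,0} : 1 ≤ i ≤ k} ∪ {s^{k+1}} ∪ {c^{i,j}}`. -/
def Chain0 (hq : 0 < q) : Set (MCG k q) :=
  {x | (∃ i : Fin (k + 1), x = sE i) ∨
       (∃ i : Fin k, x = uE i ⟨0, hq⟩ 0) ∨
       (∃ c : CIdx k, x = cE c)}

/-- The chain `U^i = {u^i_{p,j}}`. -/
def ChainU (i : Fin k) : Set (MCG k q) :=
  {x | ∃ (p : Fin q) (j : Fin (k + 1)), x = uE i p j}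

section Helpers
variable {k q : ℕ}

lemma bord_invariant {P : MCG k q → Prop}
    (h : ∀ x y, P x → Brel x y → P y) {x y : MCG k q} (hxy : BOrd x y) (hx : P x) : P y := by
  induction hxy with
  | refl => exact hx
  | tail _ hstep ih => exact h _ _ ih hstep

lemma bord_s_s (hq0 : 0 < q) (m n : ℕ) (hm : m ≤ n) (hn : n ≤ k) :
    BOrd (sE ⟨m, by omega⟩ : MCG k q) (sE ⟨n, by omega⟩) := by
  induction n with
  | zero =>
    have : m = 0 := by omega
    subst this; exact Relation.ReflTransGen.refl
  | succ n ih =>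
    rcases Nat.eq_or_lt_of_le hm with h | h
    · subst h; exact Relation.ReflTransGen.refl
    · have h1 : BOrd (sE ⟨m, by omega⟩ : MCG k q) (sE ⟨n, by omega⟩) :=
        ih (by omega) (by omega)
      have hs : Brel (sE ⟨n, by omega⟩ : MCG k q) (uP n (by omega) ⟨0, hq0⟩ 0 (by omega)) := rfl
      have hu : Brel (uP n (by omega) ⟨0, hq0⟩ 0 (by omega) : MCG k q)
          (sE ⟨n + 1, by omega⟩) := ⟨rfl, rfl, rfl⟩
      exact h1.trans ((Relation.ReflTransGen.single hs).trans
        (Relation.ReflTransGen.single hu))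

lemma bord_s_c (hq0 : 0 < q) (i : Fin (k + 1)) (c : CIdx k) :
    BOrd (sE i : MCG k q) (cE c) := by
  have hk : 0 < k := c.val.1.pos
  have h1 : BOrd (sE i : MCG k q) (sE ⟨k, by omega⟩) := by
    have := bord_s_s (k := k) (q := q) hq0 i.val k (by omega) le_rfl
    simpa using this
  have h2 : Brel (sE ⟨k, by omega⟩ : MCG k q) (cP 0 0 le_rfl hk) := ⟨rfl, rfl, rfl⟩
  have h3 : BOrd (cP 0 0 le_rfl hk : MCG k q) (cE c) := by
    by_cases hc : c.val.1.val = 0 ∧ c.val.2.val = 0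
    · have hceq : c = ⟨(⟨0, hk⟩, ⟨0, hk⟩), le_rfl⟩ :=
        Subtype.ext (Prod.ext (Fin.ext hc.1) (Fin.ext hc.2))
      rw [hceq]
      exact Relation.ReflTransGen.refl
    · refine Relation.ReflTransGen.single ?_
      show (⟨0, hk⟩ : Fin k) < c.val.1 ∨ ((⟨0, hk⟩ : Fin k) = c.val.1 ∧ (⟨0, hk⟩ : Fin k) < c.val.2)
      rcases Nat.eq_zero_or_pos c.val.1.val with h1 | h1
      · right
        refine ⟨Fin.ext (by simp [h1]), ?_⟩
        have : 0 < c.val.2.val := by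
          rcases Nat.eq_zero_or_pos c.val.2.val with h2 | h2
          · exact absurd ⟨h1, h2⟩ hc
          · exact h2
        exact Fin.lt_def.mpr (by simpa using this)
      · left; exact Fin.lt_def.mpr (by simpa using h1)
  exact h1.trans ((Relation.ReflTransGen.single h2).trans h3)

lemma bord_u00_s (hq0 : 0 < q) (i : Fin k) (n : ℕ) (hn1 : i.val < n) (hn : n ≤ k) :
    BOrd (uE i ⟨0, hq0⟩ 0 : MCG k q) (sE ⟨n, by omega⟩) := by
  have h1 : Brel (uE i ⟨0, hq0⟩ 0 : MCG k q) (sE ⟨i.val + 1, by omega⟩) := ⟨rfl, rfl, rfl⟩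
  exact (Relation.ReflTransGen.single h1).trans
    (bord_s_s hq0 (i.val + 1) n (by omega) hn)

lemma bord_s_u00 (hq0 : 0 < q) (m : ℕ) (i : Fin k) (hm : m ≤ i.val) :
    BOrd (sE ⟨m, by omega⟩ : MCG k q) (uE i ⟨0, hq0⟩ 0) := by
  have h1 : BOrd (sE ⟨m, by omega⟩ : MCG k q) (sE ⟨i.val, by omega⟩) :=
    bord_s_s hq0 m i.val hm (by omega)
  have h2 : Brel (sE ⟨i.val, by omega⟩ : MCG k q) (uE i ⟨0, hq0⟩ 0) := rfl
  exact h1.trans (Relation.ReflTransGen.single h2)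

end Helpers
section MainHelpers
variable {k q : ℕ}

lemma bord_u00_u00 (hq0 : 0 < q) (i i' : Fin k) (h : i.val ≤ i'.val) :
    BOrd (uE i ⟨0, hq0⟩ 0 : MCG k q) (uE i' ⟨0, hq0⟩ 0) := by
  rcases Nat.eq_or_lt_of_le h with h | h
  · have : i = i' := Fin.ext h
    rw [this]
    exact Relation.ReflTransGen.refl
  · have h1 : BOrd (uE i ⟨0, hq0⟩ 0 : MCG k q) (sE ⟨i'.val, by omega⟩) :=
      bord_u00_s hq0 i i'.val h (by omega)
    have h2 : Brel (sE ⟨i'.val, by omega⟩ : MCG k q) (uE i' ⟨0, hq0⟩ 0) := rfl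
    exact h1.trans (Relation.ReflTransGen.single h2)

lemma bord_c_c (c c' : CIdx k) :
    BOrd (cE c : MCG k q) (cE c') ∨ BOrd (cE c' : MCG k q) (cE c) := by
  rcases lt_trichotomy c.val.1 c'.val.1 with h | h | h
  · left; exact Relation.ReflTransGen.single (Or.inl h)
  · rcases lt_trichotomy c.val.2 c'.val.2 with h2 | h2 | h2
    · left; exact Relation.ReflTransGen.single (Or.inr ⟨h, h2⟩)
    · have : c = c' := Subtype.ext (Prod.ext h h2)
      left; rw [this]
      exact Relation.ReflTransGen.refl
    · right; exact Relation.ReflTransGen.single (Or.inr ⟨h.symm, h2⟩)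
  · right; exact Relation.ReflTransGen.single (Or.inl h)

lemma uStep (i : Fin k) :
    ∀ x y : MCG k q,
      (∃ (p : Fin q) (j : Fin (k + 1)), x = uE i p j ∧ (0 < p.val ∨ 1 ≤ j.val)) →
      Brel x y →
      (∃ (p : Fin q) (j : Fin (k + 1)), y = uE i p j ∧ (0 < p.val ∨ 1 ≤ j.val)) := by
  rintro x y ⟨p, j, rfl, hpj⟩ hB
  rcases y with i'' | c | ⟨i', p', j'⟩
  · obtain ⟨hp0, hj0, _⟩ := hB
    omega
  · exact absurd hB (by exact id)
  · obtain ⟨rfl, h⟩ := hB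
    refine ⟨p', j', rfl, ?_⟩
    rcases h with h | ⟨rfl, h⟩
    · have := Fin.lt_def.mp h; omega
    · have := Fin.lt_def.mp h; omega

lemma sStep :
    ∀ x y : MCG k q,
      (x = sE ⟨k, by omega⟩ ∨ ∃ c : CIdx k, x = cE c) →
      Brel x y →
      (y = sE ⟨k, by omega⟩ ∨ ∃ c : CIdx k, y = cE c) := by
  rintro x y (rfl | ⟨c, rfl⟩) hB
  · rcases y with i'' | c' | ⟨i', p', j'⟩
    · exact absurd hB (by exact id)
    · exact Or.inr ⟨c', rfl⟩
    · have : k = i'.val := hB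
      have := i'.isLt; omega
  · rcases y with i'' | c' | ⟨i', p', j'⟩
    · exact absurd hB (by exact id)
    · exact Or.inr ⟨c', rfl⟩
    · exact absurd hB (by exact id)

end MainHelpers

/-- the stated `k+1` sets are chains of `π(B)` covering the
ground set `A`, and `{u^i_{1,1} : 1 ≤ i ≤ k} ∪ {s^{k+1}}` is an antichain of
size `k+1`. -/
theorem stmt11 (hk : 0 < k) (hq : 2 ≤ q) :
    IsBChain (Chain0 (k := k) (q := q) (by omega)) ∧
    (∀ i : Fin k, IsBChain (ChainU (q := q) i)) ∧
    (Chain0 (by omega) ∪ ⋃ i : Fin k, ChainU i) = (Set.univ : Set (MCG k q)) ∧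
    (∀ i : Fin k,
        ¬ BOrd (uE (q := q) i ⟨0, by omega⟩ ⟨1, by omega⟩) (sE ⟨k, by omega⟩) ∧
        ¬ BOrd (sE ⟨k, by omega⟩) (uE (q := q) i ⟨0, by omega⟩ ⟨1, by omega⟩)) ∧
    (∀ i i' : Fin k, i ≠ i' →
        ¬ BOrd (uE (q := q) i ⟨0, by omega⟩ ⟨1, by omega⟩)
               (uE i' ⟨0, by omega⟩ ⟨1, by omega⟩)) ∧
    ((Finset.univ.image
        (fun i : Fin k => uE (q := q) i ⟨0, by omega⟩ ⟨1, by omega⟩)) ∪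
      {sE ⟨k, by omega⟩}).card = k + 1 := by
  have hq0 : 0 < q := by omega
  refine ⟨?_, ?_, ?_, ?_, ?_, ?_⟩
  · -- Chain0 is a chain
    rintro x (⟨i, rfl⟩ | ⟨i, rfl⟩ | ⟨c, rfl⟩) y (⟨i', rfl⟩ | ⟨i', rfl⟩ | ⟨c', rfl⟩)
    · rcases le_total i.val i'.val with h | h
      · left; exact bord_s_s hq0 i.val i'.val h (by omega)
      · right; exact bord_s_s hq0 i'.val i.val h (by omega)
    · rcases le_or_gt i.val i'.val with h | h
      · left; exact bord_s_u00 hq0 i.val i' h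
      · right; exact bord_u00_s hq0 i' i.val h (by omega)
    · left; exact bord_s_c hq0 i c'
    · rcases le_or_gt i'.val i.val with h | h
      · right; exact bord_s_u00 hq0 i'.val i h
      · left; exact bord_u00_s hq0 i i'.val h (by omega)
    · rcases le_total i.val i'.val with h | h
      · left; exact bord_u00_u00 hq0 i i' h
      · right; exact bord_u00_u00 hq0 i' i h
    · left
      exact (bord_u00_s hq0 i (i.val + 1) (by omega) (by omega)).trans
        (bord_s_c hq0 ⟨i.val + 1, by omega⟩ c')
    · right; exact bord_s_c hq0 i' c
    · right
      exact (bord_u00_s hq0 i' (i'.val + 1) (by omega) (by omega)).trans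
        (bord_s_c hq0 ⟨i'.val + 1, by omega⟩ c)
    · exact bord_c_c c c'
  · -- ChainU i is a chain
    rintro i x ⟨p, j, rfl⟩ y ⟨p', j', rfl⟩
    rcases lt_trichotomy p p' with h | h | h
    · left; exact Relation.ReflTransGen.single ⟨rfl, Or.inl h⟩
    · subst h
      rcases lt_trichotomy j j' with h2 | h2 | h2
      · left; exact Relation.ReflTransGen.single ⟨rfl, Or.inr ⟨rfl, h2⟩⟩
      · subst h2; left; exact Relation.ReflTransGen.refl
      · right; exact Relation.ReflTransGen.single ⟨rfl, Or.inr ⟨rfl, h2⟩⟩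
    · right; exact Relation.ReflTransGen.single ⟨rfl, Or.inl h⟩
  · -- covering
    ext x
    simp only [Set.mem_union, Set.mem_iUnion, Set.mem_univ, iff_true]
    rcases x with i | c | ⟨i, p, j⟩
    · left; exact Or.inl ⟨i, rfl⟩
    · left; exact Or.inr (Or.inr ⟨c, rfl⟩)
    · right; exact ⟨i, p, j, rfl⟩
  · -- antichain with s^{k+1}
    intro i
    constructor
    · intro h
      have := bord_invariant (uStep i) h
        ⟨⟨0, by omega⟩, ⟨1, by omega⟩, rfl, Or.inr (by simp)⟩
      obtain ⟨p, j, heq, _⟩ := this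
      simp [sE, uE] at heq
    · intro h
      have := bord_invariant sStep h (Or.inl rfl)
      rcases this with heq | ⟨c, heq⟩
      · simp [sE, uE] at heq
      · simp [cE, uE] at heq
  · -- antichain among the u's
    intro i i' hii' h
    have := bord_invariant (uStep i) h
      ⟨⟨0, by omega⟩, ⟨1, by omega⟩, rfl, Or.inr (by simp)⟩
    obtain ⟨p, j, heq, _⟩ := this
    simp only [uE, Sum.inr.injEq, Prod.mk.injEq] at heq
    exact hii' heq.1.symm
  · -- cardinality
    have hinj : Function.Injective
        (fun i : Fin k => uE (q := q) i ⟨0, by omega⟩ ⟨1, by omega⟩) := by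
      intro a b hab
      simpa [uE] using hab
    rw [Finset.card_union_of_disjoint, Finset.card_image_of_injective _ hinj,
      Finset.card_univ, Fintype.card_fin, Finset.card_singleton]
    rw [Finset.disjoint_singleton_right]
    simp [sE, uE]
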